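/- Let X, Y be measurable spaces, μ a σ-finite measure on Y, π a probability measure on X, and c : X ⇝ Y a Markov kernel represented by a density p_c with respect to μ. Define N : Y → [0,∞] by N(y) = ∫ p_c(y|x) dπ(x), and suppose 0 < N(y) < ∞ for (c∘π)-almost every y. Then the assignment sending y with 0 < N(y) < ∞ to the probability measure A ↦ N(y)⁻¹ ∫_A p_c(y|x) dπ(x) on X (and sending any other y to π) defines a Markov kernel c† : Y ⇝ X, and c† is a Bayesian inversion of c with respect to π. -/

import Mathlib

open MeasureTheory ProbabilityTheory
open scoped ENNReal

/-- The joint measure of the generative model `(π, c)` on `X × Y`: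
`(π ⊗ c)(E) = ∫ c(x)({y : (x,y) ∈ E}) dπ(x)`. -/
noncomputable def jointMeasure {X Y : Type*} [MeasurableSpace X] [MeasurableSpace Y]
    (π : Measure X) (c : Kernel X Y) : Measure (X × Y) :=
  π.bind (fun x => (c x).map (fun y => (x, y)))

/-- `c' : Y ⇝ X` is a Bayesian inversion of `c : X ⇝ Y` with respect to `π` if the joint
measure `π ⊗ c` equals the pushforward of `(c∘π) ⊗ c'` under the swap map. -/
def IsBayesianInversion {X Y : Type*} [MeasurableSpace X] [MeasurableSpace Y]
    (π : Measure X) (c : Kernel X Y) (c' : Kernel Y X) : Prop :=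
  jointMeasure π c = (jointMeasure (π.bind c) c').map Prod.swap

/-!
The density `p(x, y)` makes the joint measure `π ⊗ c` absolutely continuous with respect to
`π × μ` with density `p`, so `c ∘ π` has `μ`-density `N`. Both `π ⊗ c` and `(c ∘ π) ⊗ c†` then
give the rectangle `A × B` the mass `∫_B ∫_A p(x, y) dπ(x) dμ(y)`: for `c†` because
`N(y) c†(y)(A) = ∫_A p(x, y) dπ(x)` whenever `N(y) < ∞`, which holds `μ`-almost everywhere
(where `N(y) = 0` both sides vanish). Finite measures agreeing on rectangles are equal.
-/

section

variable {X Y : Type*} [MeasurableSpace X] [MeasurableSpace Y]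

lemma measurable_map_prodMk_left (c : Kernel X Y) [IsSFiniteKernel c] :
    Measurable fun x => (c x).map (Prod.mk x) := by
  refine Measure.measurable_of_measurable_coe _ fun s hs => ?_
  simp only [Measure.map_apply measurable_prodMk_left hs]
  exact Kernel.measurable_kernel_prodMk_left hs

lemma jointMeasure_eq_compProd (π : Measure X) [SFinite π] (c : Kernel X Y)
    [IsSFiniteKernel c] : jointMeasure π c = π ⊗ₘ c := by
  ext s hs
  rw [jointMeasure, Measure.bind_apply hs (measurable_map_prodMk_left c).aemeasurable,
    Measure.compProd_apply hs]
  simp only [Measure.map_apply measurable_prodMk_left hs]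

lemma isBayesianInversion_iff (π : Measure X) [IsFiniteMeasure π] (c : Kernel X Y)
    [IsFiniteKernel c] (c' : Kernel Y X) [IsSFiniteKernel c'] :
    IsBayesianInversion π c c' ↔ ∀ ⦃A : Set X⦄ ⦃B : Set Y⦄, MeasurableSet A → MeasurableSet B →
      ∫⁻ x in A, c x B ∂π = ∫⁻ y in B, c' y A ∂(c ∘ₘ π) := by
  rw [IsBayesianInversion, jointMeasure_eq_compProd, jointMeasure_eq_compProd,
    Measure.ext_prod_iff]
  refine forall₂_congr fun A B => forall₂_congr fun hA hB => ?_
  rw [Measure.compProd_apply_prod hA hB, Measure.map_apply measurable_swap (hA.prod hB),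
    Set.preimage_swap_prod, Measure.compProd_apply_prod hB hA]

section Density

variable {μ : Measure Y} {π : Measure X} {c : Kernel X Y} {p : X → Y → ℝ≥0∞}

lemma setLIntegral_kernel_eq_of_density [SFinite μ] [SFinite π]
    (hp : Measurable (Function.uncurry p))
    (hrep : ∀ x, ∀ B, MeasurableSet B → c x B = ∫⁻ y in B, p x y ∂μ) (A : Set X) {B : Set Y}
    (hB : MeasurableSet B) :
    ∫⁻ x in A, c x B ∂π = ∫⁻ y in B, ∫⁻ x in A, p x y ∂π ∂μ := by
  simp_rw [hrep _ B hB]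
  exact lintegral_lintegral_swap hp.aemeasurable

lemma comp_eq_withDensity_of_density [SFinite μ] [SFinite π]
    (hp : Measurable (Function.uncurry p))
    (hrep : ∀ x, ∀ B, MeasurableSet B → c x B = ∫⁻ y in B, p x y ∂μ) :
    c ∘ₘ π = μ.withDensity fun y => ∫⁻ x, p x y ∂π := by
  ext B hB
  rw [Measure.bind_apply hB c.measurable.aemeasurable, withDensity_apply _ hB,
    ← setLIntegral_univ, setLIntegral_kernel_eq_of_density hp hrep _ hB]
  simp_rw [setLIntegral_univ]

end Density

lemma ae_ne_top_of_ae_withDensity {μ : Measure Y} {f : Y → ℝ≥0∞} (hf : Measurable f)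
    (h : ∀ᵐ y ∂μ.withDensity f, f y < ∞) : ∀ᵐ y ∂μ, f y ≠ ∞ := by
  filter_upwards [(ae_withDensity_iff hf).mp h] with y hy
  by_cases h0 : f y = 0
  · simp [h0]
  · exact (hy h0).ne

noncomputable def densityPosterior (π : Measure X) [SFinite π] (p : X → Y → ℝ≥0∞)
    (hp : Measurable (Function.uncurry p)) : Kernel Y X where
  toFun y :=
    if 0 < ∫⁻ x, p x y ∂π ∧ ∫⁻ x, p x y ∂π < ⊤ then
      (∫⁻ x, p x y ∂π)⁻¹ • π.withDensity (fun x => p x y)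
    else π
  measurable' := by
    have hN : Measurable fun y => ∫⁻ x, p x y ∂π := hp.lintegral_prod_left
    refine Measure.measurable_of_measurable_coe _ fun A hA => ?_
    simp only [apply_ite (fun m : Measure X => m A), Measure.smul_apply, smul_eq_mul,
      withDensity_apply _ hA]
    exact Measurable.ite ((measurableSet_lt measurable_const hN).inter
      (measurableSet_lt hN measurable_const)) (hN.inv.mul hp.lintegral_prod_left) measurable_const

section Posterior

variable {π : Measure X} [SFinite π] {p : X → Y → ℝ≥0∞} (hp : Measurable (Function.uncurry p))

instance [IsProbabilityMeasure π] : IsMarkovKernel (densityPosterior π p hp) := by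
  refine ⟨fun y => ⟨?_⟩⟩
  change (if _ then _ else π) Set.univ = 1
  split_ifs with h
  · rw [Measure.smul_apply, withDensity_apply _ .univ, setLIntegral_univ, smul_eq_mul,
      ENNReal.inv_mul_cancel h.1.ne' h.2.ne]
  · exact measure_univ

lemma lintegral_mul_densityPosterior_apply {y : Y} (hy : ∫⁻ x, p x y ∂π ≠ ∞) {A : Set X}
    (hA : MeasurableSet A) :
    (∫⁻ x, p x y ∂π) * densityPosterior π p hp y A = ∫⁻ x in A, p x y ∂π := by
  change _ * (if _ then _ else π) A = _
  rcases eq_zero_or_pos (∫⁻ x, p x y ∂π) with h0 | hpos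
  · rw [h0, zero_mul, eq_comm, ← nonpos_iff_eq_zero, ← h0]
    exact setLIntegral_le_lintegral A _
  · rw [if_pos ⟨hpos, hy.lt_top⟩, Measure.smul_apply, withDensity_apply _ hA, smul_eq_mul,
      ← mul_assoc, ENNReal.mul_inv_cancel hpos.ne' hy, one_mul]

end Posterior

end

/-- For a channel `c` represented by a density `p_c` with respect to a σ-finite measure `μ`,
with normalizer `N(y) = ∫ p_c(y|x) dπ(x)` nontrivial `(c∘π)`-almost everywhere, the
assignment `y ↦ N(y)⁻¹ ∫_{-} p_c(y|x) dπ(x)` (defaulting to `π` where the normalizer is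
degenerate) defines a Markov kernel which is a Bayesian inversion of `c` w.r.t. `π`. -/
theorem bayesian_inversion_exists_of_density
    {X Y : Type*} [MeasurableSpace X] [MeasurableSpace Y]
    (μ : Measure Y) [SigmaFinite μ]
    (π : Measure X) [IsProbabilityMeasure π]
    (c : Kernel X Y) [IsMarkovKernel c]
    (p : X → Y → ℝ≥0∞) (hp : Measurable (Function.uncurry p))
    (hrep : ∀ x, ∀ B, MeasurableSet B → c x B = ∫⁻ y in B, p x y ∂μ)
    (N : Y → ℝ≥0∞) (hN : N = fun y => ∫⁻ x, p x y ∂π)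
    (hNae : ∀ᵐ y ∂(π.bind c), 0 < N y ∧ N y < ⊤) :
    ∃ cInv : Kernel Y X, IsMarkovKernel cInv ∧
      (⇑cInv = fun y =>
        if 0 < N y ∧ N y < ⊤ then (N y)⁻¹ • π.withDensity (fun x => p x y) else π) ∧
      IsBayesianInversion π c cInv := by
  subst hN
  have hNm : Measurable fun y => ∫⁻ x, p x y ∂π := hp.lintegral_prod_left
  have hmarginal : c ∘ₘ π = μ.withDensity fun y => ∫⁻ x, p x y ∂π :=
    comp_eq_withDensity_of_density hp hrep
  have hfin : ∀ᵐ y ∂μ, ∫⁻ x, p x y ∂π ≠ ∞ :=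
    ae_ne_top_of_ae_withDensity hNm (hmarginal ▸ hNae.mono fun _ h => h.2)
  refine ⟨densityPosterior π p hp, inferInstance, rfl,
    (isBayesianInversion_iff _ _ _).2 fun A B hA hB => ?_⟩
  rw [setLIntegral_kernel_eq_of_density hp hrep A hB, hmarginal,
    setLIntegral_withDensity_eq_setLIntegral_mul _ hNm (Kernel.measurable_coe _ hA) hB]
  exact lintegral_congr_ae <| ae_restrict_of_ae <|
    hfin.mono fun y hy => (lintegral_mul_densityPosterior_apply hp hy hA).symm
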